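/- Let A be a weak alternating Büchi automaton of height at most 2 whose initial formula only mentions rejecting states (class AWW[2,R]). Then A accepts a word w if and only if there exists a run G = (V,E) of A on w such that (i) δ(q, w[l]) is not equivalent to ff for every node (q,l) ∈ V, and (ii) there exists a threshold k ≥ 0 such that for every l ≥ k and every node (q,l) ∈ V, the state q is accepting. -/

import Mathlib

open scoped Classical

/-- Positive Boolean formulas over a set of variables `Q`. -/
inductive PosBool (Q : Type) : Type
  | tt : PosBool Q
  | ff : PosBool Q
  | var (q : Q) : PosBool Q
  | and (a b : PosBool Q) : PosBool Q
  | or (a b : PosBool Q) : PosBool Q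

variable {Q σ : Type}

/-- `S` is a model of `θ`. -/
def PosBool.models (S : Set Q) : PosBool Q → Prop
  | .tt => True
  | .ff => False
  | .var q => q ∈ S
  | .and a b => a.models S ∧ b.models S
  | .or a b => a.models S ∨ b.models S

/-- `S` is a minimal model of `θ`. -/
def PosBool.MinModel (S : Set Q) (θ : PosBool Q) : Prop :=
  θ.models S ∧ ∀ S' : Set Q, S' ⊂ S → ¬ θ.models S'

/-- `θ ≢ ff` iff `θ` has some model. -/
def PosBool.Satisfiable (θ : PosBool Q) : Prop := ∃ S : Set Q, θ.models S

/-- The variables occurring in `θ`. -/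
def PosBool.vars : PosBool Q → Set Q
  | .tt => ∅
  | .ff => ∅
  | .var q => {q}
  | .and a b => a.vars ∪ b.vars
  | .or a b => a.vars ∪ b.vars

/-- An alternating Büchi word automaton `⟨Σ, Q, θ₀, δ, α⟩`. -/
structure ABW (σ Q : Type) where
  init : PosBool Q
  δ : Q → σ → PosBool Q
  acc : Set Q

namespace ABW

variable (A : ABW σ Q) (w : ℕ → σ)

/-- A run of `A` on `w`: a DAG with vertex set `V ⊆ Q × ℕ` (second component
the level) and edge relation `E` between consecutive levels. -/
structure IsRun (V : Set (Q × ℕ)) (E : Q × ℕ → Q × ℕ → Prop) : Prop where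
  edges : ∀ p q : Q × ℕ, E p q → p ∈ V ∧ q ∈ V ∧ q.2 = p.2 + 1
  init : ∃ S : Set Q, PosBool.MinModel S A.init ∧ ∀ q : Q, (q, 0) ∈ V ↔ q ∈ S
  trans : ∀ q l, (q, l) ∈ V →
    ¬ (A.δ q (w l)).Satisfiable ∨
      PosBool.MinModel {q' : Q | E (q, l) (q', l + 1)} (A.δ q (w l))
  pred : ∀ q l, (q, l + 1) ∈ V → ∃ q' : Q, E (q', l) (q, l + 1)

/-- A run is accepting if all transition formulas along it are satisfiable and
every infinite path visits accepting states infinitely often. -/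
def AcceptingRun (V : Set (Q × ℕ)) (E : Q × ℕ → Q × ℕ → Prop) : Prop :=
  A.IsRun w V E ∧
  (∀ q l, (q, l) ∈ V → (A.δ q (w l)).Satisfiable) ∧
  (∀ p : ℕ → Q × ℕ, p 0 ∈ V → (∀ i, E (p i) (p (i + 1))) →
    ∀ i, ∃ j, i ≤ j ∧ (p j).1 ∈ A.acc)

/-- `A` accepts `w`. -/
def Accepts : Prop := ∃ V E, A.AcceptingRun w V E

/-- The step relation on states: `q ⟶ q'` iff `q'` occurs in a minimal model of
some transition formula of `q`. -/
def Step (q q' : Q) : Prop :=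
  ∃ (a : σ) (S : Set Q), PosBool.MinModel S (A.δ q a) ∧ q' ∈ S

/-- `A` is weak: states can be partitioned (here: ranked) so that the rank is
nondecreasing along transitions and each rank class is entirely accepting or
entirely rejecting. -/
def Weak : Prop :=
  ∃ rank : Q → ℕ,
    (∀ q q', A.Step q q' → rank q ≤ rank q') ∧
    (∀ q q', rank q = rank q' → (q ∈ A.acc ↔ q' ∈ A.acc))

/-- `A` has height at most 2: every path through the state graph alternates at
most once between accepting and rejecting states. -/
def Height2 : Prop :=
  ∀ (p : ℕ → Q) (n : ℕ), (∀ i < n, A.Step (p i) (p (i + 1))) →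
    ((Finset.range n).filter fun i => ¬ ((p i ∈ A.acc) ↔ (p (i + 1) ∈ A.acc))).card ≤ 1

/-- The initial formula only mentions rejecting states. -/
def InitRejecting : Prop := A.init.vars ⊆ A.accᶜ

end ABW

section Aux

variable {Q σ : Type}

lemma PosBool.models_mono {θ : PosBool Q} {S S' : Set Q} (h : S ⊆ S') (hm : θ.models S) :
    θ.models S' := by
  induction θ with
  | tt => trivial
  | ff => exact hm
  | var q => exact h hm
  | and a b iha ihb => exact ⟨iha hm.1, ihb hm.2⟩
  | or a b iha ihb => exact hm.elim (fun h' => Or.inl (iha h')) (fun h' => Or.inr (ihb h'))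

lemma PosBool.models_inter_vars {θ : PosBool Q} {S : Set Q} (hm : θ.models S) :
    θ.models (S ∩ θ.vars) := by
  induction θ with
  | tt => trivial
  | ff => exact hm
  | var q => exact ⟨hm, rfl⟩
  | and a b iha ihb =>
      exact ⟨models_mono (fun x hx => ⟨hx.1, Or.inl hx.2⟩) (iha hm.1),
             models_mono (fun x hx => ⟨hx.1, Or.inr hx.2⟩) (ihb hm.2)⟩
  | or a b iha ihb =>
      exact hm.elim
        (fun h' => Or.inl (models_mono (fun x hx => ⟨hx.1, Or.inl hx.2⟩) (iha h')))
        (fun h' => Or.inr (models_mono (fun x hx => ⟨hx.1, Or.inr hx.2⟩) (ihb h')))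

lemma PosBool.MinModel.subset_vars {θ : PosBool Q} {S : Set Q} (h : PosBool.MinModel S θ) :
    S ⊆ θ.vars := by
  by_contra hns
  rw [Set.not_subset] at hns
  obtain ⟨x, hxS, hxv⟩ := hns
  exact h.2 (S ∩ θ.vars)
    ⟨Set.inter_subset_left, fun hsub => hxv (hsub hxS).2⟩
    (PosBool.models_inter_vars h.1)

lemma PosBool.vars_finite (θ : PosBool Q) : θ.vars.Finite := by
  induction θ with
  | tt => exact Set.finite_empty
  | ff => exact Set.finite_empty
  | var q => exact Set.finite_singleton q
  | and a b iha ihb => exact iha.union ihb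
  | or a b iha ihb => exact iha.union ihb

lemma exists_flip {P : ℕ → Prop} {l : ℕ} (h0 : ¬ P 0) (hl : P l) :
    ∃ i < l, ¬ P i ∧ P (i + 1) := by
  induction l with
  | zero => exact absurd hl h0
  | succ n ih =>
    by_cases hn : P n
    · obtain ⟨i, hi, h⟩ := ih hn
      exact ⟨i, Nat.lt_succ_of_lt hi, h⟩
    · exact ⟨n, Nat.lt_succ_self n, hn, hl⟩

theorem aww2R_forward {σ Q : Type} (A : ABW σ Q)
    (hheight : A.Height2) (hinit : A.InitRejecting)
    (w : ℕ → σ) (V : Set (Q × ℕ)) (E : Q × ℕ → Q × ℕ → Prop)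
    (hrun : A.IsRun w V E)
    (hsat : ∀ q l, (q, l) ∈ V → (A.δ q (w l)).Satisfiable)
    (hpath : ∀ p : ℕ → Q × ℕ, p 0 ∈ V → (∀ i, E (p i) (p (i + 1))) →
      ∀ i, ∃ j, i ≤ j ∧ (p j).1 ∈ A.acc) :
    ∃ k : ℕ, ∀ l, k ≤ l → ∀ q : Q, (q, l) ∈ V → q ∈ A.acc := by
  -- minimal-model transition
  have hmm : ∀ q l, (q, l) ∈ V →
      PosBool.MinModel {q' : Q | E (q, l) (q', l + 1)} (A.δ q (w l)) :=
    fun q l h => (hrun.trans q l h).resolve_left (not_not_intro (hsat q l h))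
  -- edges give Step
  have hStep : ∀ q l q', E (q, l) (q', l + 1) → A.Step q q' := by
    intro q l q' hE
    exact ⟨w l, _, hmm q l (hrun.edges _ _ hE).1, hE⟩
  -- chains back to level 0
  have hchain : ∀ l q, (q, l) ∈ V → ∃ c : ℕ → Q, c l = q ∧
      (∀ i < l, E (c i, i) (c (i + 1), i + 1)) ∧ ∀ i ≤ l, (c i, i) ∈ V := by
    intro l
    induction l with
    | zero =>
      intro q hq
      exact ⟨fun _ => q, rfl, fun i hi => absurd hi (Nat.not_lt_zero i),
        fun i hi => by rwa [Nat.le_zero.mp hi]⟩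
    | succ n ih =>
      intro q hq
      obtain ⟨q', hE⟩ := hrun.pred q n hq
      obtain ⟨c, hcl, hce, hcv⟩ := ih q' (hrun.edges _ _ hE).1
      refine ⟨fun i => if i = n + 1 then q else c i, by simp, ?_, ?_⟩
      · intro i hi
        rcases Nat.lt_succ_iff_lt_or_eq.mp hi with hi' | hi'
        · simpa [show i ≠ n + 1 by omega, show i + 1 ≠ n + 1 by omega, show i ≠ n by omega] using hce i hi'
        · subst hi'; simpa [hcl] using hE
      · intro i hi
        rcases Nat.lt_succ_iff_lt_or_eq.mp (Nat.lt_succ_of_le hi) with hi' | hi'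
        · simpa [Nat.ne_of_lt hi'] using hcv i (Nat.lt_succ_iff.mp hi')
        · subst hi'; simpa using hq
  -- level 0 is rejecting
  obtain ⟨S0, hS0min, hS0iff⟩ := hrun.init
  have h0rej : ∀ q : Q, (q, 0) ∈ V → q ∉ A.acc := by
    intro q hq
    exact hinit (hS0min.subset_vars ((hS0iff q).mp hq))
  -- successors of accepting nodes are accepting
  have hsucc_acc : ∀ q l q', E (q, l) (q', l + 1) → q ∈ A.acc → q' ∈ A.acc := by
    intro q l q' hE hq
    by_contra hq'
    obtain ⟨c, hcl, hce, hcv⟩ := hchain l q (hrun.edges _ _ hE).1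
    set p : ℕ → Q := fun i => if i ≤ l then c i else q' with hp
    have hpl : p l = q := by simp [hp, hcl]
    have hpl1 : p (l + 1) = q' := by simp [hp]
    have hp0 : p 0 = c 0 := by simp [hp]
    have hsteps : ∀ i < l + 1, A.Step (p i) (p (i + 1)) := by
      intro i hi
      rcases Nat.lt_succ_iff_lt_or_eq.mp hi with hi' | hi'
      · have h1 : p i = c i := by simp [hp, Nat.le_of_lt hi']
        have h2 : p (i + 1) = c (i + 1) := by simp [hp, Nat.succ_le_of_lt hi']
        rw [h1, h2]; exact hStep _ _ _ (hce i hi')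
      · subst hi'
        rw [hpl, hpl1]; exact hStep _ _ _ hE
    have hcard := hheight p (l + 1) hsteps
    have h0 : ¬ p 0 ∈ A.acc := by
      rw [hp0]; exact h0rej (c 0) (hcv 0 (Nat.zero_le l))
    have hflip := exists_flip (P := fun i => p i ∈ A.acc) h0 (hpl ▸ hq)
    obtain ⟨i, hil, hpi, hpi1⟩ := hflip
    have hi_mem : i ∈ (Finset.range (l + 1)).filter
        fun i => ¬ ((p i ∈ A.acc) ↔ (p (i + 1) ∈ A.acc)) := by
      simp only [Finset.mem_filter, Finset.mem_range]
      exact ⟨Nat.lt_succ_of_lt hil, fun h => hpi (h.mpr hpi1)⟩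
    have hl_mem : l ∈ (Finset.range (l + 1)).filter
        fun i => ¬ ((p i ∈ A.acc) ↔ (p (i + 1) ∈ A.acc)) := by
      simp only [Finset.mem_filter, Finset.mem_range]
      refine ⟨Nat.lt_succ_self l, fun h => ?_⟩
      rw [hpl, hpl1] at h
      exact hq' (h.mp hq)
    have : 1 < ((Finset.range (l + 1)).filter
        fun i => ¬ ((p i ∈ A.acc) ↔ (p (i + 1) ∈ A.acc))).card :=
      Finset.one_lt_card.mpr ⟨i, hi_mem, l, hl_mem, Nat.ne_of_lt hil⟩
    omega
  -- rejecting nodes have rejecting predecessors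
  have hrejpred : ∀ q l, (q, l + 1) ∈ V → q ∉ A.acc →
      ∃ q', (q', l) ∈ V ∧ q' ∉ A.acc ∧ E (q', l) (q, l + 1) := by
    intro q l hq hqr
    obtain ⟨q', hE⟩ := hrun.pred q l hq
    refine ⟨q', (hrun.edges _ _ hE).1, fun hacc => hqr (hsucc_acc q' l q hE hacc), hE⟩
  -- rejecting chains
  have hchainR : ∀ l q, (q, l) ∈ V → q ∉ A.acc → ∃ c : ℕ → Q, c l = q ∧
      (∀ i < l, E (c i, i) (c (i + 1), i + 1)) ∧
      ∀ i ≤ l, (c i, i) ∈ V ∧ c i ∉ A.acc := by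
    intro l
    induction l with
    | zero =>
      intro q hq hr
      exact ⟨fun _ => q, rfl, fun i hi => absurd hi (Nat.not_lt_zero i),
        fun i hi => by rw [Nat.le_zero.mp hi]; exact ⟨hq, hr⟩⟩
    | succ n ih =>
      intro q hq hr
      obtain ⟨q', hq'V, hq'r, hE⟩ := hrejpred q n hq hr
      obtain ⟨c, hcl, hce, hcv⟩ := ih q' hq'V hq'r
      refine ⟨fun i => if i = n + 1 then q else c i, by simp, ?_, ?_⟩
      · intro i hi
        rcases Nat.lt_succ_iff_lt_or_eq.mp hi with hi' | hi'
        · simpa [show i ≠ n + 1 by omega, show i + 1 ≠ n + 1 by omega, show i ≠ n by omega] using hce i hi'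
        · subst hi'; simpa [hcl] using hE
      · intro i hi
        rcases Nat.lt_succ_iff_lt_or_eq.mp (Nat.lt_succ_of_le hi) with hi' | hi'
        · simpa [Nat.ne_of_lt hi'] using hcv i (Nat.lt_succ_iff.mp hi')
        · subst hi'; simpa using ⟨hq, hr⟩
  -- finiteness of levels
  have hfin : ∀ l : ℕ, {q : Q | (q, l) ∈ V}.Finite := by
    intro l
    induction l with
    | zero =>
      refine ((PosBool.vars_finite A.init).subset hS0min.subset_vars).subset ?_
      intro q hq; exact (hS0iff q).mp hq
    | succ n ih =>
      refine (ih.biUnion (fun q' _ => PosBool.vars_finite (A.δ q' (w n)))).subset ?_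
      intro q hq
      obtain ⟨q', hE⟩ := hrun.pred q n hq
      have hq'V : (q', n) ∈ V := (hrun.edges _ _ hE).1
      exact Set.mem_biUnion hq'V ((hmm q' n hq'V).subset_vars hE)
  -- König's lemma argument
  by_contra hcon
  push_neg at hcon
  -- rejecting nodes at every level
  have hall : ∀ l : ℕ, ∃ q, (q, l) ∈ V ∧ q ∉ A.acc := by
    intro l
    obtain ⟨l', hll', q, hqV, hqr⟩ := hcon l
    obtain ⟨c, _, _, hcv⟩ := hchainR l' q hqV hqr
    exact ⟨c l, hcv l hll'⟩
  -- Good q l : from (q,l) there are arbitrarily long all-rejecting chains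
  set Good : Q → ℕ → Prop := fun q l => ∀ m : ℕ, ∃ c : ℕ → Q, c l = q ∧
      (∀ i, l ≤ i → i < l + m → E (c i, i) (c (i + 1), i + 1)) ∧
      (∀ i, l ≤ i → i ≤ l + m → (c i, i) ∈ V ∧ c i ∉ A.acc) with hGood
  have hGoodV : ∀ q l, Good q l → (q, l) ∈ V ∧ q ∉ A.acc := by
    intro q l hg
    obtain ⟨c, hcl, _, hcv⟩ := hg 0
    have := hcv l le_rfl (by omega)
    rwa [hcl] at this
  -- a Good root exists
  have hroot : ∃ r : Q, Good r 0 := by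
    have hch : ∀ l : ℕ, ∃ c : ℕ → Q,
        (∀ i < l, E (c i, i) (c (i + 1), i + 1)) ∧
        (∀ i ≤ l, (c i, i) ∈ V ∧ c i ∉ A.acc) := by
      intro l
      obtain ⟨q, hqV, hqr⟩ := hall l
      obtain ⟨c, _, hce, hcv⟩ := hchainR l q hqV hqr
      exact ⟨c, hce, hcv⟩
    choose F hF1 hF2 using hch
    haveI : Finite {q : Q // (q, 0) ∈ V} := (hfin 0).to_subtype
    set g : ℕ → {q : Q // (q, 0) ∈ V} :=
      fun l => ⟨F l 0, (hF2 l 0 (Nat.zero_le l)).1⟩ with hg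
    obtain ⟨r, hr⟩ := Finite.exists_infinite_fiber g
    refine ⟨r.1, ?_⟩
    intro m
    have hinf : (g ⁻¹' {r}).Infinite := Set.infinite_coe_iff.mp hr
    obtain ⟨n, hn_mem, hn_ge⟩ := hinf.exists_gt m
    have hFn0 : F n 0 = r.1 := congrArg Subtype.val hn_mem
    refine ⟨F n, hFn0, ?_, ?_⟩
    · intro i _ hi
      exact hF1 n i (by omega)
    · intro i _ hi
      exact hF2 n i (by omega)
  -- Good nodes have Good successors
  have hGstep : ∀ q l, Good q l → ∃ q', E (q, l) (q', l + 1) ∧ Good q' (l + 1) := by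
    intro q l hg
    have hqV : (q, l) ∈ V := (hGoodV q l hg).1
    have hmin := hmm q l hqV
    haveI : Finite {q' : Q // E (q, l) (q', l + 1)} := by
      have : {q' : Q | E (q, l) (q', l + 1)}.Finite :=
        (PosBool.vars_finite (A.δ q (w l))).subset hmin.subset_vars
      exact this.to_subtype
    choose c hc1 hc2 hc3 using hg
    set g : ℕ → {q' : Q // E (q, l) (q', l + 1)} :=
      fun m => ⟨c (m + 1) (l + 1), by
        have := hc2 (m + 1) l le_rfl (by omega)
        rwa [hc1 (m + 1)] at this⟩ with hgdef
    obtain ⟨q', hq'⟩ := Finite.exists_infinite_fiber g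
    refine ⟨q'.1, q'.2, ?_⟩
    intro m
    have hinf : (g ⁻¹' {q'}).Infinite := Set.infinite_coe_iff.mp hq'
    obtain ⟨n, hn_mem, hn_ge⟩ := hinf.exists_gt m
    have hcn : c (n + 1) (l + 1) = q'.1 := congrArg Subtype.val hn_mem
    refine ⟨c (n + 1), hcn, ?_, ?_⟩
    · intro i hi1 hi2
      exact hc2 (n + 1) i (by omega) (by omega)
    · intro i hi1 hi2
      exact hc3 (n + 1) i (by omega) (by omega)
  -- build the infinite rejecting path
  obtain ⟨r, hr⟩ := hroot
  choose nxt hnxt1 hnxt2 using hGstep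
  set P : ∀ n : ℕ, {q : Q // Good q n} :=
    fun n => Nat.rec ⟨r, hr⟩ (fun n prev => ⟨nxt prev.1 n prev.2, hnxt2 prev.1 n prev.2⟩) n
    with hP
  set p : ℕ → Q × ℕ := fun n => ((P n).1, n) with hpdef
  have hp0 : p 0 ∈ V := (hGoodV r 0 hr).1
  have hpe : ∀ i, E (p i) (p (i + 1)) := by
    intro i
    exact hnxt1 (P i).1 i (P i).2
  obtain ⟨j, _, hjacc⟩ := hpath p hp0 hpe 0
  exact (hGoodV (P j).1 j (P j).2).2 hjacc

end Aux

/-- an automaton in `AWW[2,R]` accepts `w` iff it has a run in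
which every transition formula is satisfiable and, from some threshold level
on, all states are accepting. -/
theorem aww2R_accepts_iff {σ Q : Type} (A : ABW σ Q)
    (hweak : A.Weak) (hheight : A.Height2) (hinit : A.InitRejecting)
    (w : ℕ → σ) :
    A.Accepts w ↔
      ∃ (V : Set (Q × ℕ)) (E : Q × ℕ → Q × ℕ → Prop),
        A.IsRun w V E ∧
        (∀ q l, (q, l) ∈ V → (A.δ q (w l)).Satisfiable) ∧
        ∃ k : ℕ, ∀ l, k ≤ l → ∀ q : Q, (q, l) ∈ V → q ∈ A.acc := by
  constructor
  · rintro ⟨V, E, hrun, hsat, hpath⟩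
    exact ⟨V, E, hrun, hsat, aww2R_forward A hheight hinit w V E hrun hsat hpath⟩
  · rintro ⟨V, E, hrun, hsat, k, hk⟩
    refine ⟨V, E, hrun, hsat, ?_⟩
    intro p hp0 hpe i
    have hmem : ∀ n, p n ∈ V := by
      intro n
      induction n with
      | zero => exact hp0
      | succ m _ => exact (hrun.edges _ _ (hpe m)).2.1
    have hlev : ∀ n, (p n).2 = (p 0).2 + n := by
      intro n
      induction n with
      | zero => rfl
      | succ m ih =>
        have := (hrun.edges _ _ (hpe m)).2.2
        omega
    refine ⟨i + k, Nat.le_add_right i k, ?_⟩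
    have h1 : k ≤ (p (i + k)).2 := by
      have := hlev (i + k); omega
    have h2 : ((p (i + k)).1, (p (i + k)).2) ∈ V := by
      rw [Prod.mk.eta]; exact hmem (i + k)
    exact hk (p (i + k)).2 h1 (p (i + k)).1 h2
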